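/- For every w* ∈ ℝ and every ε > 0, with σ the sigmoid and R(w) = (σ(w) - σ(w*))/(w - w*), the following exact identity holds: σ'(w*)/R(w*+ε) + σ'(w*)/R(w*-ε) = ε·sinh(ε)/(cosh(ε) - 1) = ε/tanh(ε/2). -/

import Mathlib

noncomputable def sigmoid (w : ℝ) : ℝ := 1 / (1 + Real.exp (-w))

/-!
Writing `s = σ(w)`, a shift of the argument acts on the sigmoid as the Möbius map
`σ(w + h) = s eʰ / (1 + s (eʰ - 1))`. Dividing `σ'(w) = s (1 - s)` by the resulting increment
gives `σ'(w) / (σ(w + h) - σ(w)) = s + 1 / (eʰ - 1)`. In the symmetric sum over `h = ±ε` the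
terms in `s` cancel, which is why the result does not depend on `w*`, and what remains,
`ε (1 / (e^ε - 1) - 1 / (e^{-ε} - 1)) = ε (e^ε + 1) / (e^ε - 1)`, is `ε coth (ε / 2)`.
-/

lemma sigmoid_eq_real_sigmoid : sigmoid = Real.sigmoid := by
  funext w
  rw [sigmoid, Real.sigmoid_def, one_div]

namespace Real

lemma sigmoid_add (w h : ℝ) :
    sigmoid (w + h) = sigmoid w * exp h / (1 + sigmoid w * (exp h - 1)) := by
  rw [sigmoid_def, sigmoid_def, neg_add, exp_add, exp_neg h]
  field_simp
  rw [eq_comm, div_eq_one_iff_eq (by linarith [exp_pos h, exp_pos (-w)])]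
  ring

lemma one_add_sigmoid_mul_exp_sub_one_pos (w h : ℝ) : 0 < 1 + sigmoid w * (exp h - 1) := by
  nlinarith [exp_pos h, sigmoid_pos w, sigmoid_lt_one w]

lemma sigmoid_add_sub_sigmoid (w h : ℝ) :
    sigmoid (w + h) - sigmoid w
      = sigmoid w * (1 - sigmoid w) * (exp h - 1) / (1 + sigmoid w * (exp h - 1)) := by
  have hden := (one_add_sigmoid_mul_exp_sub_one_pos w h).ne'
  rw [sigmoid_add, eq_div_iff hden, sub_mul, div_mul_cancel₀ _ hden]
  ring

lemma deriv_sigmoid_div_sigmoid_add_sub {h : ℝ} (w : ℝ) (hh : h ≠ 0) :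
    deriv sigmoid w / (sigmoid (w + h) - sigmoid w) = sigmoid w + (exp h - 1)⁻¹ := by
  have hexp : exp h - 1 ≠ 0 := sub_ne_zero.mpr ((exp_eq_one_iff h).not.mpr hh)
  have hσ : sigmoid w * (1 - sigmoid w) ≠ 0 :=
    mul_ne_zero (sigmoid_pos w).ne' (sub_pos.mpr (sigmoid_lt_one w)).ne'
  rw [deriv_sigmoid, sigmoid_add_sub_sigmoid, div_div_eq_mul_div, mul_div_mul_left _ _ hσ,
    add_div, one_div, mul_div_cancel_right₀ _ hexp, add_comm]

lemma inv_exp_sub_one_sub_inv_exp_neg_sub_one (x : ℝ) :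
    (exp x - 1)⁻¹ - (exp (-x) - 1)⁻¹ = (exp x + 1) / (exp x - 1) := by
  rw [show exp (-x) - 1 = -(exp x - 1) * (exp x)⁻¹ by rw [exp_neg]; field_simp; ring,
    mul_inv, inv_inv, inv_neg]
  ring

lemma sinh_div_cosh_sub_one (x : ℝ) : sinh x / (cosh x - 1) = (tanh (x / 2))⁻¹ := by
  obtain ⟨y, rfl⟩ : ∃ y, x = 2 * y := ⟨x / 2, by ring⟩
  rw [mul_div_cancel_left₀ y two_ne_zero, sinh_two_mul, cosh_two_mul, cosh_sq,
    tanh_eq_sinh_div_cosh, inv_div]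
  rcases eq_or_ne (sinh y) 0 with hs | hs
  · simp [hs]
  · rw [show sinh y ^ 2 + 1 + sinh y ^ 2 - 1 = 2 * sinh y * sinh y by ring,
      mul_div_mul_left _ _ (by simpa using hs)]

lemma tanh_half (x : ℝ) : tanh (x / 2) = (exp x - 1) / (exp x + 1) := by
  have hsq : exp x = exp (x / 2) ^ 2 := by rw [← exp_nat_mul]; ring_nf
  rw [tanh_eq, exp_neg, hsq]
  field_simp

end Real

theorem secant_slope_reciprocal_identity
    (wstar ε : ℝ) (hε : 0 < ε)
    (R : ℝ → ℝ)
    (hR : ∀ w, w ≠ wstar → R w = (sigmoid w - sigmoid wstar) / (w - wstar)) :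
    deriv sigmoid wstar / R (wstar + ε) + deriv sigmoid wstar / R (wstar - ε)
        = ε * Real.sinh ε / (Real.cosh ε - 1) ∧
    ε * Real.sinh ε / (Real.cosh ε - 1) = ε / Real.tanh (ε / 2) := by
  have hcoth : ε * Real.sinh ε / (Real.cosh ε - 1) = ε / Real.tanh (ε / 2) := by
    rw [mul_div_assoc, Real.sinh_div_cosh_sub_one, ← div_eq_mul_inv]
  refine ⟨?_, hcoth⟩
  have hR_add : ∀ h ≠ 0, deriv sigmoid wstar / R (wstar + h)
      = h * (Real.sigmoid wstar + (Real.exp h - 1)⁻¹) := by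
    intro h hh
    rw [hR _ (by simpa using hh), add_sub_cancel_left, div_div_eq_mul_div, mul_comm,
      mul_div_assoc, sigmoid_eq_real_sigmoid, Real.deriv_sigmoid_div_sigmoid_add_sub wstar hh]
  rw [hcoth, sub_eq_add_neg, hR_add ε hε.ne', hR_add (-ε) (neg_ne_zero.mpr hε.ne'),
    neg_mul, ← sub_eq_add_neg, ← mul_sub, add_sub_add_left_eq_sub,
    Real.inv_exp_sub_one_sub_inv_exp_neg_sub_one, Real.tanh_half, div_div_eq_mul_div, mul_div_assoc]
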